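/- arXiv:2107.13442 — 2 statements merged into one kernel-verified Lean document; each statement's English description precedes it below -/
import Mathlib

section
/- In the symmetric group S_n with the long cycle c = (1,2,…,n), the interval [e, c] in absolute order is isomorphic as a poset to the lattice of noncrossing partitions of {1,…,n} ordered by refinement. -/
open Equiv

/-- The reflection length of a permutation: the minimal number of transpositions whose
product is `σ`. -/
noncomputable def reflLen {n : ℕ} (σ : Perm (Fin n)) : ℕ :=
  sInf {k | ∃ l : List (Perm (Fin n)), (∀ t ∈ l, t.IsSwap) ∧ l.length = k ∧ l.prod = σ}

/-- The absolute order on `S_n`: `w ≤_T z` iff `ℓ_T(w) + ℓ_T(w⁻¹ z) = ℓ_T(z)`. -/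
def absLe {n : ℕ} (w z : Perm (Fin n)) : Prop :=
  reflLen w + reflLen (w⁻¹ * z) = reflLen z

/-- A finite set partition of `{1,…,n}` is noncrossing if there are no indices
`i < j < k < l` with `i, k` in one block and `j, l` in a different block. -/
def IsNoncrossing {n : ℕ} (P : Finpartition (Finset.univ : Finset (Fin n))) : Prop :=
  ¬ ∃ (i j k l : Fin n) (B₁ B₂ : Finset (Fin n)), i < j ∧ j < k ∧ k < l ∧
      B₁ ∈ P.parts ∧ B₂ ∈ P.parts ∧ B₁ ≠ B₂ ∧ i ∈ B₁ ∧ k ∈ B₁ ∧ j ∈ B₂ ∧ l ∈ B₂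

/-!
Write `c` for the long cycle. Multiplying a permutation by a transposition `(p q)` merges the
cycles through `p` and `q` or splits their common cycle, so `ℓ_T(σ) = n - #cycles(σ)`, and
`w ≤_T z` forces every cycle of `w` into a cycle of `z`.

To a partition `π` attach the permutation `c_π` running through every block in increasing
order, so that `c` belongs to the one-block partition. Splitting a block `B ∋ q < p` of a
noncrossing `π` into `B ∩ (q, p]` and the rest is right multiplication of `c_π` by `(p q)`; it
keeps `π` noncrossing and shortens `c_π` by one. Walking down from `c` one transposition at a
time, every `w ≤_T c` is therefore `c_π` for the noncrossing partition `π` of its cycles.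
Conversely, if `π < σ` are noncrossing, cutting a block of `σ` next to a block of `π` spanning
the fewest elements gives such a splitting of `σ` still above `π`, so `c_π ≤_T c_σ` by
induction. Hence `w ↦ (cycles of w)` is an isomorphism of posets.
-/

open Equiv.Perm Finset

noncomputable section

namespace AbsoluteOrder

lemma _root_.Setoid.rel_congr_left {α : Type*} {r : Setoid α} {x y z : α} (h : r x y) :
    r x z ↔ r y z :=
  ⟨r.trans (r.symm h), r.trans h⟩

lemma _root_.Setoid.rel_congr_right {α : Type*} {r : Setoid α} {x y z : α} (h : r y z) :
    r x y ↔ r x z :=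
  ⟨fun h' => r.trans h' h, fun h' => r.trans h' (r.symm h)⟩

section Blocks

variable {α : Type*} [Fintype α]

open scoped Classical in
def block (r : Setoid α) (x : α) : Finset α := {y | r x y}

@[simp] lemma mem_block {r : Setoid α} {x y : α} : y ∈ block r x ↔ r x y := by
  simp [block]

lemma self_mem_block (r : Setoid α) (x : α) : x ∈ block r x :=
  mem_block.2 (r.refl x)

lemma block_eq_block_iff {r : Setoid α} {x y : α} : block r x = block r y ↔ r x y := by
  refine ⟨fun h => mem_block.1 (h ▸ self_mem_block r y), fun h => ?_⟩
  ext z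
  simp only [mem_block]
  exact r.rel_congr_left h

lemma block_eq_of_mem {r : Setoid α} {x y : α} (h : y ∈ block r x) : block r y = block r x :=
  (block_eq_block_iff.2 (mem_block.1 h)).symm

end Blocks

section Cycles

variable {α : Type*} [Fintype α]

lemma _root_.Equiv.Perm.SameCycle.mem_of_mapsTo {σ : Perm α} {s : Set α} {x y : α}
    (hs : Set.MapsTo σ s s) (hx : x ∈ s) (h : σ.SameCycle x y) : y ∈ s := by
  obtain ⟨i, -, rfl⟩ := h.exists_pow_eq'
  exact hs.perm_pow i hx

lemma sameCycle_iff_of_eqOn {σ τ : Perm α} {x : α}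
    (h : ∀ z, σ.SameCycle x z → τ z = σ z) {y : α} : τ.SameCycle x y ↔ σ.SameCycle x y := by
  have hτσ : ∀ {y}, τ.SameCycle x y → σ.SameCycle x y := fun hy =>
    hy.mem_of_mapsTo (s := {z | σ.SameCycle x z})
      (fun z hz => by simpa [h z hz, sameCycle_apply_right] using hz) SameCycle.rfl
  refine ⟨hτσ, fun hy => hy.mem_of_mapsTo (s := {z | τ.SameCycle x z}) (fun z hz => ?_)
    SameCycle.rfl⟩
  simpa [← h z (hτσ hz), sameCycle_apply_right] using hz

omit [Fintype α] in
@[simp] lemma sameCycle_setoid_iff {σ : Perm α} {x y : α} :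
    SameCycle.setoid σ x y ↔ σ.SameCycle x y :=
  Iff.rfl

variable [DecidableEq α]

def cycles (σ : Perm α) : Finset (Finset α) := univ.image (block (SameCycle.setoid σ))

def numCycles (σ : Perm α) : ℕ := #(cycles σ)

lemma sameCycle_mul_swap_iff {σ : Perm α} {p q x y : α} (hp : ¬σ.SameCycle x p)
    (hq : ¬σ.SameCycle x q) : (σ * swap p q).SameCycle x y ↔ σ.SameCycle x y :=
  sameCycle_iff_of_eqOn fun z hz => by
    rw [mul_apply, swap_apply_of_ne_of_ne (by rintro rfl; exact hp hz) (by rintro rfl; exact hq hz)]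

lemma filter_cycles_subset_mul_swap (σ : Perm α) (p q : α) :
    {B ∈ cycles σ | p ∉ B ∧ q ∉ B} ⊆ {B ∈ cycles (σ * swap p q) | p ∉ B ∧ q ∉ B} := by
  simp only [cycles, subset_iff, mem_filter, mem_image, mem_univ, true_and]
  rintro _ ⟨⟨x, rfl⟩, hp, hq⟩
  simp only [mem_block, sameCycle_setoid_iff] at hp hq
  refine ⟨⟨x, ?_⟩, ?_⟩
  · ext y; simp [sameCycle_mul_swap_iff hp hq]
  · simpa using ⟨hp, hq⟩

lemma numCycles_eq_card_filter_add_card_pair (σ : Perm α) (p q : α) :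
    numCycles σ = #{B ∈ cycles σ | p ∉ B ∧ q ∉ B} +
      #{block (SameCycle.setoid σ) p, block (SameCycle.setoid σ) q} := by
  rw [numCycles, ← card_filter_add_card_filter_not (fun B => p ∉ B ∧ q ∉ B)]
  congr 2
  ext B
  simp only [cycles, mem_filter, mem_image, mem_univ, true_and, mem_insert, mem_singleton]
  constructor
  · rintro ⟨⟨x, rfl⟩, h⟩
    rw [not_and_or, not_not, not_not] at h
    rcases h with h | h <;> [left; right] <;> exact block_eq_block_iff.2 (mem_block.1 h)
  · rintro (rfl | rfl)
    · exact ⟨⟨p, rfl⟩, by simp⟩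
    · exact ⟨⟨q, rfl⟩, by simp⟩

lemma card_pair_block_add_ite (σ : Perm α) (p q : α) :
    #{block (SameCycle.setoid σ) p, block (SameCycle.setoid σ) q} +
      (if σ.SameCycle p q then 1 else 0) = 2 := by
  split_ifs with h
  · rw [block_eq_block_iff.2 h, pair_eq_singleton, card_singleton]
  · rw [card_pair (mt block_eq_block_iff.1 h)]

/-- The cycles avoiding `p` and `q` are the same for `σ` and `σ * swap p q`; the others are
the cycles through `p` and `q`. -/
theorem numCycles_mul_swap_add_ite (σ : Perm α) (p q : α) :
    numCycles (σ * swap p q) + (if (σ * swap p q).SameCycle p q then 1 else 0) =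
      numCycles σ + (if σ.SameCycle p q then 1 else 0) := by
  have hfilter := (filter_cycles_subset_mul_swap σ p q).antisymm
    (by simpa [mul_assoc] using filter_cycles_subset_mul_swap (σ * swap p q) p q)
  have h₁ := card_pair_block_add_ite σ p q
  have h₂ := card_pair_block_add_ite (σ * swap p q) p q
  rw [numCycles_eq_card_filter_add_card_pair σ p q,
    numCycles_eq_card_filter_add_card_pair (σ * swap p q) p q, hfilter]
  omega

lemma numCycles_le_card (σ : Perm α) : numCycles σ ≤ Fintype.card α :=
  card_image_le

lemma numCycles_one : numCycles (1 : Perm α) = Fintype.card α := by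
  rw [numCycles, cycles, card_image_of_injective _ fun x y h => ?_, card_univ]
  simpa using block_eq_block_iff.1 h

lemma eq_one_of_numCycles_eq_card {σ : Perm α} (h : numCycles σ = Fintype.card α) : σ = 1 := by
  have hinj := card_image_iff.1 (h.trans card_univ.symm)
  ext x
  exact hinj (mem_coe.2 (mem_univ _)) (mem_coe.2 (mem_univ _))
    (block_eq_block_iff.2 (sameCycle_apply_left.2 SameCycle.rfl))

lemma card_le_numCycles_prod_add_length {l : List (Perm α)} (hl : ∀ t ∈ l, t.IsSwap) :
    Fintype.card α ≤ numCycles l.prod + l.length := by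
  induction l using List.reverseRecOn with
  | nil => simp [numCycles_one]
  | append_singleton l t ih =>
    obtain ⟨p, q, -, rfl⟩ := hl t (by simp)
    have hcount := numCycles_mul_swap_add_ite l.prod p q
    have hl' := ih fun s hs => hl s (by simp [hs])
    simp only [List.prod_append, List.prod_singleton, List.length_append, List.length_singleton]
    split_ifs at * <;> omega

lemma exists_numCycles_mul_swap_eq_succ {σ : Perm α} (hσ : σ ≠ 1) :
    ∃ p q, p ≠ q ∧ numCycles (σ * swap p q) = numCycles σ + 1 := by
  obtain ⟨x, hx⟩ : ∃ x, σ x ≠ x := by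
    by_contra! h
    exact hσ (Equiv.ext h)
  have hne : x ≠ σ⁻¹ x := fun h => hx (by simpa using congrArg σ h)
  -- `σ * swap x (σ⁻¹ x)` fixes `x`, cutting it off the cycle of `σ` through `x` and `σ⁻¹ x`.
  refine ⟨x, σ⁻¹ x, hne, ?_⟩
  have hfix : (σ * swap x (σ⁻¹ x)) x = x := by simp
  have := numCycles_mul_swap_add_ite σ x (σ⁻¹ x)
  rw [if_neg fun h => hne (h.eq_of_left hfix),
    if_pos (show σ.SameCycle x (σ⁻¹ x) from SameCycle.rfl.symm_apply_right)] at this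
  omega

lemma exists_swap_list_length_add_numCycles (σ : Perm α) :
    ∃ l : List (Perm α), (∀ t ∈ l, t.IsSwap) ∧ l.prod = σ ∧
      l.length + numCycles σ = Fintype.card α := by
  induction hk : Fintype.card α - numCycles σ generalizing σ with
  | zero =>
    have := numCycles_le_card σ
    exact ⟨[], by simp, (eq_one_of_numCycles_eq_card (by omega)).symm,
      by rw [List.length_nil]; omega⟩
  | succ k ih =>
    have hσ : σ ≠ 1 := by rintro rfl; simp [numCycles_one] at hk
    obtain ⟨p, q, hpq, hcount⟩ := exists_numCycles_mul_swap_eq_succ hσ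
    obtain ⟨l, hl, hprod, hlen⟩ := ih (σ * swap p q) (by omega)
    refine ⟨l ++ [swap p q], ?_, by simp [hprod],
      by rw [List.length_append, List.length_singleton]; omega⟩
    simpa [or_imp, forall_and] using ⟨hl, ⟨p, q, hpq, rfl⟩⟩

end Cycles

section ReflectionLength

variable {n : ℕ}

lemma reflLen_le_length {l : List (Perm (Fin n))} (hl : ∀ t ∈ l, t.IsSwap) :
    reflLen l.prod ≤ l.length :=
  Nat.sInf_le ⟨l, hl, rfl, rfl⟩

lemma exists_swap_list_length_eq_reflLen (σ : Perm (Fin n)) :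
    ∃ l : List (Perm (Fin n)), (∀ t ∈ l, t.IsSwap) ∧ l.length = reflLen σ ∧ l.prod = σ := by
  obtain ⟨l, hl, hprod, -⟩ := exists_swap_list_length_add_numCycles σ
  exact Nat.sInf_mem (s := {k | ∃ l : List (Perm (Fin n)), (∀ t ∈ l, t.IsSwap) ∧ l.length = k ∧
    l.prod = σ}) ⟨l.length, l, hl, rfl, hprod⟩

theorem reflLen_eq_card_sub_numCycles (σ : Perm (Fin n)) : reflLen σ = n - numCycles σ := by
  obtain ⟨l, hl, hprod, hlen⟩ := exists_swap_list_length_add_numCycles σ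
  obtain ⟨l', hl', hlen', hprod'⟩ := exists_swap_list_length_eq_reflLen σ
  have h₁ := hprod ▸ reflLen_le_length hl
  have h₂ := hprod' ▸ card_le_numCycles_prod_add_length hl'
  simp only [Fintype.card_fin] at hlen h₂
  omega

lemma reflLen_one : reflLen (1 : Perm (Fin n)) = 0 := by
  simpa using reflLen_le_length (l := []) (by simp)

lemma reflLen_mul_le (a b : Perm (Fin n)) : reflLen (a * b) ≤ reflLen a + reflLen b := by
  obtain ⟨la, hla, hlena, rfl⟩ := exists_swap_list_length_eq_reflLen a
  obtain ⟨lb, hlb, hlenb, rfl⟩ := exists_swap_list_length_eq_reflLen b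
  simpa [hlena, hlenb] using
    reflLen_le_length (l := la ++ lb) fun t ht => (List.mem_append.1 ht).elim (hla t) (hlb t)

lemma reflLen_swap_le (p q : Fin n) : reflLen (swap p q) ≤ 1 := by
  rcases eq_or_ne p q with rfl | hpq
  · rw [show swap p p = 1 from swap_self p, reflLen_one]
    exact zero_le_one
  · simpa using reflLen_le_length (l := [swap p q]) (by simpa using ⟨p, q, hpq, rfl⟩)

lemma reflLen_mul_swap_le (σ : Perm (Fin n)) (p q : Fin n) :
    reflLen (σ * swap p q) ≤ reflLen σ + 1 :=
  (reflLen_mul_le _ _).trans (by have := reflLen_swap_le p q; omega)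

lemma reflLen_le_reflLen_add_reflLen_inv_mul (a b : Perm (Fin n)) :
    reflLen b ≤ reflLen a + reflLen (a⁻¹ * b) := by
  simpa using reflLen_mul_le a (a⁻¹ * b)

lemma absLe_iff_le {a b : Perm (Fin n)} : absLe a b ↔ reflLen a + reflLen (a⁻¹ * b) ≤ reflLen b :=
  ⟨le_of_eq, fun h => h.antisymm (reflLen_le_reflLen_add_reflLen_inv_mul a b)⟩

lemma absLe_refl (σ : Perm (Fin n)) : absLe σ σ := by
  simp [absLe, reflLen_one]

lemma exists_absLe_mul_swap {a z : Perm (Fin n)} (h : absLe a z) (hne : a ≠ z) :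
    ∃ p q, reflLen (a * swap p q) = reflLen a + 1 ∧ absLe (a * swap p q) z := by
  obtain ⟨_ | ⟨t, l⟩, hl, hlen, hprod⟩ := exists_swap_list_length_eq_reflLen (a⁻¹ * z)
  · exact absurd (inv_mul_eq_one.1 hprod.symm) hne
  obtain ⟨p, q, -, rfl⟩ := hl t (by simp)
  have hrest : (a * swap p q)⁻¹ * z = l.prod := by
    rw [mul_inv_rev, swap_inv, mul_assoc, ← hprod, List.prod_cons, ← mul_assoc, swap_mul_self,
      one_mul]
  have h₁ := reflLen_mul_swap_le a p q
  have h₂ := hrest ▸ reflLen_le_length fun s hs => hl s (List.mem_cons_of_mem _ hs)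
  have h₃ := reflLen_le_reflLen_add_reflLen_inv_mul (a * swap p q) z
  simp only [absLe, List.length_cons] at h hlen ⊢
  exact ⟨p, q, by omega, by omega⟩

lemma absLe_mul_swap {u v : Perm (Fin n)} {p q : Fin n} (h : absLe u v)
    (hv : reflLen (v * swap p q) = reflLen v + 1) : absLe u (v * swap p q) := by
  have := reflLen_mul_swap_le (u⁻¹ * v) p q
  rw [absLe_iff_le, ← mul_assoc]
  unfold absLe at h
  omega

theorem absLe_induction {z : Perm (Fin n)} {motive : Perm (Fin n) → Prop} (top : motive z)
    (step : ∀ a p q, reflLen (a * swap p q) = reflLen a + 1 → absLe (a * swap p q) z →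
      motive (a * swap p q) → motive a) {a : Perm (Fin n)} (h : absLe a z) : motive a := by
  induction hk : reflLen z - reflLen a using Nat.strong_induction_on generalizing a with
  | _ k ih =>
    rcases eq_or_ne a z with rfl | hne
    · exact top
    obtain ⟨p, q, hlen, hle⟩ := exists_absLe_mul_swap h hne
    exact step a p q hlen hle (ih _ (by unfold absLe at hle; omega) hle rfl)

lemma sameCycle_mul_swap_of_reflLen {σ : Perm (Fin n)} {p q : Fin n}
    (h : reflLen (σ * swap p q) = reflLen σ + 1) :
    (σ * swap p q).SameCycle p q ∧ ∀ x y, σ.SameCycle x y → (σ * swap p q).SameCycle x y := by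
  have hcount := numCycles_mul_swap_add_ite σ p q
  set τ := σ * swap p q
  rw [reflLen_eq_card_sub_numCycles, reflLen_eq_card_sub_numCycles] at h
  have hle := numCycles_le_card σ
  simp only [Fintype.card_fin] at hle
  have hτ : τ.SameCycle p q := by by_contra hτ; split_ifs at hcount <;> omega
  refine ⟨hτ, fun x y hxy => ?_⟩
  by_cases hx : σ.SameCycle x p ∨ σ.SameCycle x q
  · -- A `τ`-cycle avoiding `p` and `q` would be a cycle of `σ = τ * swap p q` as well.
    have hmeets : ∀ z, σ.SameCycle x z → τ.SameCycle z p := by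
      intro z hz
      by_contra hzp
      have hzq : ¬τ.SameCycle z q := fun hzq => hzp (hzq.trans hτ.symm)
      have hback : ∀ w, σ.SameCycle z w ↔ τ.SameCycle z w := fun w => by
        simpa [τ, mul_swap_mul_self] using sameCycle_mul_swap_iff (σ := τ) hzp hzq (y := w)
      rcases hx with hxp | hxq
      · exact hzp ((hback p).1 (hz.symm.trans hxp))
      · exact hzq ((hback q).1 (hz.symm.trans hxq))
    exact (hmeets x SameCycle.rfl).trans (hmeets y hxy).symm
  · rw [not_or] at hx
    exact (sameCycle_mul_swap_iff hx.1 hx.2).2 hxy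

theorem sameCycle_of_absLe {a b : Perm (Fin n)} (h : absLe a b) {x y : Fin n}
    (hxy : a.SameCycle x y) : b.SameCycle x y := by
  refine absLe_induction (motive := fun a => ∀ x y, a.SameCycle x y → b.SameCycle x y)
    (fun _ _ => id) (fun a p q hlen _ ih x y hxy => ih x y ?_) h x y hxy
  exact (sameCycle_mul_swap_of_reflLen hlen).2 x y hxy

end ReflectionLength

section SuccIn

variable {α : Type*} [LinearOrder α] {S T : Finset α} {x y : α}

def succIn (S : Finset α) (x : α) : α :=
  if h : ∃ y ∈ S, x < y then {y ∈ S | x < y}.min' (filter_nonempty_iff.2 h)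
  else if hS : S.Nonempty then S.min' hS else x

lemma succIn_spec (h : ∃ y ∈ S, x < y) :
    succIn S x ∈ S ∧ x < succIn S x ∧ ∀ z ∈ S, x < z → succIn S x ≤ z := by
  have hmem := min'_mem _ (filter_nonempty_iff.2 h)
  rw [mem_filter] at hmem
  rw [succIn, dif_pos h]
  exact ⟨hmem.1, hmem.2, fun z hz hxz => min'_le _ _ (mem_filter.2 ⟨hz, hxz⟩)⟩

lemma succIn_of_forall_le (hS : S.Nonempty) (h : ∀ z ∈ S, z ≤ x) : succIn S x = S.min' hS := by
  rw [succIn, dif_neg (by simpa using h), dif_pos hS]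

lemma succIn_mem (hS : S.Nonempty) : succIn S x ∈ S := by
  by_cases h : ∃ y ∈ S, x < y
  · exact (succIn_spec h).1
  · push Not at h
    exact succIn_of_forall_le hS h ▸ min'_mem S hS

lemma succIn_eq_of_lt (hy : y ∈ S) (hxy : x < y) (h : ∀ z ∈ S, x < z → y ≤ z) :
    succIn S x = y :=
  have hspec := succIn_spec ⟨y, hy, hxy⟩
  (hspec.2.2 y hy hxy).antisymm (h _ hspec.1 hspec.2.1)

lemma succIn_eq_of_subset (hTS : T ⊆ S) (hx : x ∈ T) (h : succIn S x ∈ T) :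
    succIn T x = succIn S x := by
  by_cases hex : ∃ y ∈ S, x < y
  · obtain ⟨-, hlt, hmin⟩ := succIn_spec hex
    exact succIn_eq_of_lt h hlt fun z hz => hmin z (hTS hz)
  · push Not at hex
    have hS : S.Nonempty := ⟨x, hTS hx⟩
    rw [succIn_of_forall_le hS hex] at h ⊢
    rw [succIn_of_forall_le ⟨x, hx⟩ fun z hz => hex z (hTS hz)]
    exact (min'_le _ _ h).antisymm (min'_le _ _ (hTS (min'_mem _ _)))

lemma succIn_injOn (hx : x ∈ S) (hy : y ∈ S) (h : succIn S x = succIn S y) : x = y := by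
  by_contra hne
  wlog hxy : x < y generalizing x y
  · exact this hy hx h.symm (Ne.symm hne) (lt_of_le_of_ne (not_lt.1 hxy) (Ne.symm hne))
  obtain ⟨-, hxs, hsy⟩ := succIn_spec ⟨y, hy, hxy⟩
  have hsy := hsy y hy hxy
  by_cases hex : ∃ z ∈ S, y < z
  · exact absurd (h ▸ (succIn_spec hex).2.1) (not_lt.2 hsy)
  · push Not at hex
    rw [h, succIn_of_forall_le ⟨x, hx⟩ hex] at hxs
    exact absurd hxs (not_lt.2 (min'_le _ _ hx))

lemma exists_succIn_eq (hy : y ∈ S) (hmin : S.min' ⟨y, hy⟩ < y) :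
    ∃ x ∈ S, x < y ∧ succIn S x = y := by
  have hne : {z ∈ S | z < y}.Nonempty := ⟨_, mem_filter.2 ⟨min'_mem _ _, hmin⟩⟩
  obtain ⟨hxS, hxy⟩ := mem_filter.1 (max'_mem _ hne)
  refine ⟨_, hxS, hxy, succIn_eq_of_lt hy hxy fun z hz hxz => not_lt.1 fun hzy => ?_⟩
  exact absurd (le_max' _ z (mem_filter.2 ⟨hz, hzy⟩)) (not_le.2 hxz)

end SuccIn

section SuccPerm

variable {α : Type*} [Fintype α] [LinearOrder α]

lemma succIn_block_injective (r : Setoid α) :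
    Function.Injective fun x => succIn (block r x) x := by
  intro x y (h : succIn (block r x) x = succIn (block r y) y)
  have hx := succIn_mem (x := x) ⟨x, self_mem_block r x⟩
  have hy := succIn_mem (x := y) ⟨y, self_mem_block r y⟩
  have hxy : block r x = block r y :=
    block_eq_block_iff.2 (r.trans (mem_block.1 hx) (r.symm (mem_block.1 (h ▸ hy))))
  exact succIn_injOn (self_mem_block r x) (hxy ▸ self_mem_block r y) (hxy ▸ h)

/-- The permutation `c_π` of the partition `π` into the blocks of `r`. -/
def succPerm (r : Setoid α) : Perm α :=
  Equiv.ofBijective _ (Finite.injective_iff_bijective.1 (succIn_block_injective r))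

lemma succPerm_apply (r : Setoid α) (x : α) : succPerm r x = succIn (block r x) x :=
  rfl

lemma succPerm_mem_block (r : Setoid α) (x : α) : succPerm r x ∈ block r x :=
  succIn_mem ⟨x, self_mem_block r x⟩

theorem sameCycle_succPerm_iff {r : Setoid α} {x y : α} : (succPerm r).SameCycle x y ↔ r x y := by
  refine ⟨fun h => mem_block.1 (h.mem_of_mapsTo (s := ↑(block r x)) (fun z hz => ?_)
    (self_mem_block r x)), fun h => ?_⟩
  · rw [mem_coe, ← block_eq_of_mem hz]
    exact succPerm_mem_block r z
  · set S := block r x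
    have hS : S.Nonempty := ⟨x, self_mem_block r x⟩
    suffices hmin : ∀ y ∈ S, (succPerm r).SameCycle (S.min' hS) y from
      (hmin x (self_mem_block r x)).symm.trans (hmin y (mem_block.2 h))
    intro y hy
    induction y using WellFoundedLT.induction with
    | _ y ih =>
      rcases (min'_le S y hy).lt_or_eq with hlt | heq
      · obtain ⟨z, hz, hzy, hsucc⟩ := exists_succIn_eq hy hlt
        refine (ih z hzy hz).trans ⟨1, ?_⟩
        rw [zpow_one, succPerm_apply, block_eq_of_mem hz, hsucc]
      · exact heq ▸ SameCycle.rfl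

end SuccPerm

section Cut

variable {α : Type*} [LinearOrder α] {S : Finset α} {p q x : α}

/-! Cutting a finite set `S ∋ q < p` into `S ∩ (q, p]` and its complement turns the cyclic
successor map of `S` into two cycles, exchanging the successors of `p` and `q`. -/

lemma succIn_filter_Ioc_self (hp : p ∈ S) (hqp : q < p) :
    succIn {y ∈ S | q < y ∧ y ≤ p} p = succIn S q := by
  obtain ⟨hs, hqs, hmin⟩ := succIn_spec ⟨p, hp, hqp⟩
  have hs₁ : succIn S q ∈ {y ∈ S | q < y ∧ y ≤ p} := mem_filter.2 ⟨hs, hqs, hmin p hp hqp⟩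
  rw [succIn_of_forall_le ⟨_, hs₁⟩ fun z hz => (mem_filter.1 hz).2.2]
  exact (min'_le _ _ hs₁).antisymm
    (le_min' _ _ _ fun z hz => hmin z (mem_filter.1 hz).1 (mem_filter.1 hz).2.1)

lemma succIn_filter_Ioc (hp : p ∈ S) (hx : x ∈ {y ∈ S | q < y ∧ y ≤ p}) (hxp : x ≠ p) :
    succIn {y ∈ S | q < y ∧ y ≤ p} x = succIn S x := by
  obtain ⟨-, hqx, hxp'⟩ := mem_filter.1 hx
  have hxp := lt_of_le_of_ne hxp' hxp
  obtain ⟨hs, hxs, hmin⟩ := succIn_spec ⟨p, hp, hxp⟩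
  exact succIn_eq_of_subset (filter_subset _ _) hx
    (mem_filter.2 ⟨hs, hqx.trans hxs, hmin p hp hxp⟩)

lemma succIn_filter_not_Ioc_self (hq : q ∈ S) (hqp : q < p) :
    succIn {y ∈ S | ¬(q < y ∧ y ≤ p)} q = succIn S p := by
  by_cases hex : ∃ z ∈ S, p < z
  · obtain ⟨hs, hps, hmin⟩ := succIn_spec hex
    refine succIn_eq_of_lt (mem_filter.2 ⟨hs, fun h => h.2.not_gt hps⟩) (hqp.trans hps)
      fun z hz hqz => hmin z (mem_filter.1 hz).1 ?_
    exact lt_of_not_ge fun hzp => (mem_filter.1 hz).2 ⟨hqz, hzp⟩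
  · push Not at hex
    have hle : ∀ z ∈ {y ∈ S | ¬(q < y ∧ y ≤ p)}, z ≤ q := fun z hz =>
      not_lt.1 fun hqz => (mem_filter.1 hz).2 ⟨hqz, hex z (mem_filter.1 hz).1⟩
    have hmin₂ : S.min' ⟨q, hq⟩ ∈ {y ∈ S | ¬(q < y ∧ y ≤ p)} :=
      mem_filter.2 ⟨min'_mem _ _, fun h => h.1.not_ge (min'_le _ _ hq)⟩
    rw [succIn_of_forall_le ⟨_, hmin₂⟩ hle, succIn_of_forall_le ⟨q, hq⟩ hex]
    exact (min'_le _ _ hmin₂).antisymm (min'_le _ _ (mem_filter.1 (min'_mem _ _)).1)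

lemma succIn_filter_not_Ioc (hq : q ∈ S) (hx : x ∈ {y ∈ S | ¬(q < y ∧ y ≤ p)}) (hxq : x ≠ q) :
    succIn {y ∈ S | ¬(q < y ∧ y ≤ p)} x = succIn S x := by
  obtain ⟨hxS, hxI⟩ := mem_filter.1 hx
  refine succIn_eq_of_subset (filter_subset _ _) hx (mem_filter.2 ⟨succIn_mem ⟨x, hxS⟩, ?_⟩)
  rcases lt_or_gt_of_ne hxq with hxq | hqx
  · obtain ⟨-, -, hmin⟩ := succIn_spec ⟨q, hq, hxq⟩
    exact fun h => h.1.not_ge (hmin q hq hxq)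
  · have hpx : p < x := lt_of_not_ge fun hxp => hxI ⟨hqx, hxp⟩
    by_cases hex : ∃ z ∈ S, x < z
    · exact fun h => h.2.not_gt (hpx.trans (succIn_spec hex).2.1)
    · push Not at hex
      rw [succIn_of_forall_le ⟨x, hxS⟩ hex]
      exact fun h => h.1.not_ge (min'_le _ _ hq)

end Cut

section Split

variable {α : Type*} [LinearOrder α]

def _root_.Setoid.IsNoncrossing (r : Setoid α) : Prop :=
  ∀ ⦃i j k l⦄, i < j → j < k → k < l → r i k → r j l → r i j

/-- Split the block of `p` into its part in the interval `(q, p]` and the rest. -/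
def splitAt (r : Setoid α) (q p : α) : Setoid α :=
  r ⊓ Setoid.ker fun x => r p x ∧ q < x ∧ x ≤ p

lemma splitAt_iff {r : Setoid α} {q p x y : α} :
    splitAt r q p x y ↔ r x y ∧ ((r p x ∧ q < x ∧ x ≤ p) ↔ (r p y ∧ q < y ∧ y ≤ p)) := by
  rw [splitAt, Setoid.inf_iff_and, Setoid.ker_def, eq_iff_iff]

theorem _root_.Setoid.IsNoncrossing.splitAt {r : Setoid α} (hr : r.IsNoncrossing) (q p : α) :
    (splitAt r q p).IsNoncrossing := by
  intro i j k l hij hjk hkl hik hjl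
  rw [splitAt_iff] at hik hjl ⊢
  have hrij := hr hij hjk hkl hik.1 hjl.1
  refine ⟨hrij, ?_⟩
  have hpj : r p i ↔ r p j := r.rel_congr_right hrij
  have hpk : r p i ↔ r p k := r.rel_congr_right hik.1
  constructor
  · rintro ⟨hp, hqi, hip⟩
    have := hik.2.1 ⟨hp, hqi, hip⟩
    exact ⟨hpj.1 hp, hqi.trans hij, (hjk.trans_le this.2.2).le⟩
  · rintro ⟨hp, hqj, hjp⟩
    have hl := hjl.2.1 ⟨hp, hqj, hjp⟩
    by_contra hi
    exact hi (hik.2.2 ⟨hpk.1 (hpj.2 hp), hqj.trans hjk, (hkl.trans_le hl.2.2).le⟩)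

lemma isNoncrossing_top : (⊤ : Setoid α).IsNoncrossing :=
  fun _ _ _ _ _ _ _ _ _ => trivial

lemma le_splitAt {r s : Setoid α} {q p : α} {C : α → Prop} (hrs : r ≤ s)
    (hC : ∀ ⦃x y⦄, r x y → (C x ↔ C y)) (hpq : ∀ y, (s p y ∧ q < y ∧ y ≤ p) ↔ C y) :
    r ≤ splitAt s q p :=
  Setoid.le_def.2 fun hxy => splitAt_iff.2 ⟨hrs hxy, by rw [hpq, hpq]; exact hC hxy⟩

end Split

section SplitPerm

variable {α : Type*} [Fintype α] [LinearOrder α]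

lemma block_splitAt_of_not {r : Setoid α} {q p x : α} (hx : ¬r p x) :
    block (splitAt r q p) x = block r x := by
  ext y
  simp only [mem_block, splitAt_iff, and_iff_left_iff_imp]
  intro hxy
  simp [hx, mt (r.rel_congr_right hxy).2 hx]

lemma block_splitAt {r : Setoid α} {q p x : α} (hx : r p x) :
    block (splitAt r q p) x =
      if q < x ∧ x ≤ p then {y ∈ block r p | q < y ∧ y ≤ p}
      else {y ∈ block r p | ¬(q < y ∧ y ≤ p)} := by
  ext y
  split_ifs with h <;> simp +contextual [splitAt_iff, h, hx, r.rel_congr_left hx]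

theorem succPerm_splitAt {r : Setoid α} {q p : α} (hqp : q < p) (hpq : r p q) :
    succPerm (splitAt r q p) = succPerm r * swap p q := by
  ext x
  rw [mul_apply, succPerm_apply, succPerm_apply]
  by_cases hx : r p x
  · have hp : p ∈ block r p := self_mem_block r p
    have hq : q ∈ block r p := mem_block.2 hpq
    rw [block_splitAt hx]
    rcases eq_or_ne x p with rfl | hxp
    · rw [if_pos ⟨hqp, le_rfl⟩, swap_apply_left, succIn_filter_Ioc_self hp hqp,
        block_eq_of_mem hq]
    rcases eq_or_ne x q with rfl | hxq
    · rw [if_neg fun h => h.1.false, swap_apply_right, succIn_filter_not_Ioc_self hq hqp]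
    rw [swap_apply_of_ne_of_ne hxp hxq, block_eq_of_mem (mem_block.2 hx)]
    split_ifs with h
    · exact succIn_filter_Ioc hp (mem_filter.2 ⟨mem_block.2 hx, h⟩) hxp
    · exact succIn_filter_not_Ioc hq (mem_filter.2 ⟨mem_block.2 hx, h⟩) hxq
  · rw [block_splitAt_of_not hx, swap_apply_of_ne_of_ne (by rintro rfl; exact hx (r.refl x))
      (by rintro rfl; exact hx hpq)]

lemma succPerm_splitAt_mul_swap {r : Setoid α} {q p : α} (hqp : q < p) (hpq : r p q) :
    succPerm (splitAt r q p) * swap p q = succPerm r := by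
  rw [succPerm_splitAt hqp hpq, mul_swap_mul_self]

lemma exists_succPerm_mul_swap_eq {r : Setoid α} {p q : α} (hpq : p ≠ q) (h : r p q) :
    ∃ q' p', succPerm r * swap p q = succPerm (splitAt r q' p') := by
  rcases lt_or_gt_of_ne hpq with hlt | hgt
  · exact ⟨p, q, by rw [swap_comm, succPerm_splitAt hlt (r.symm h)]⟩
  · exact ⟨q, p, (succPerm_splitAt hgt h).symm⟩

lemma setoid_sameCycle_succPerm (r : Setoid α) : SameCycle.setoid (succPerm r) = r :=
  Setoid.ext fun _ _ => sameCycle_succPerm_iff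

end SplitPerm

section Refinement

variable {α : Type*} [Fintype α] [LinearOrder α] {r s : Setoid α}

def spanIcc (A : Finset α) : Finset α := {z | ∃ u ∈ A, ∃ v ∈ A, u ≤ z ∧ z ≤ v}

/-- Take a block of `r` meeting `B` that spans the fewest elements. -/
lemma _root_.Setoid.IsNoncrossing.exists_convex_block (hr : r.IsNoncrossing)
    {B : Finset α} (hB : B.Nonempty) :
    ∃ a ∈ B, ∀ ⦃u v z⦄, r a u → r a v → z ∈ B → u < z → z < v → r a z := by
  obtain ⟨a, ha, hmin⟩ := exists_min_image B (fun a => #(spanIcc (block r a))) hB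
  refine ⟨a, ha, fun u v z hu hv hz huz hzv => by_contra fun haz => ?_⟩
  have hinside : ∀ w, r z w → u < w ∧ w < v := by
    intro w hzw
    have hnot : ¬r a w := fun haw => haz (r.trans haw (r.symm hzw))
    refine ⟨lt_of_not_ge fun hwu => ?_, lt_of_not_ge fun hvw => ?_⟩
    · rcases hwu.lt_or_eq with hwu | rfl
      · exact hnot (r.trans hu (r.symm (hr hwu huz hzv (r.symm hzw) (r.trans (r.symm hu) hv))))
      · exact hnot hu
    · rcases hvw.lt_or_eq with hvw | rfl
      · exact haz (r.trans hu (hr huz hzv hvw (r.trans (r.symm hu) hv) hzw))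
      · exact hnot hv
  have hsub : spanIcc (block r z) ⊂ spanIcc (block r a) := by
    refine ssubset_iff_of_subset (fun y hy => ?_) |>.2 ⟨u, ?_, fun hu' => ?_⟩
    · obtain ⟨w₁, hw₁, w₂, hw₂, h₁, h₂⟩ := by simpa [spanIcc] using hy
      simp only [spanIcc, mem_filter, mem_univ, true_and, mem_block]
      exact ⟨u, hu, v, hv, ((hinside w₁ hw₁).1.trans_le h₁).le, (h₂.trans_lt (hinside w₂ hw₂).2).le⟩
    · simp only [spanIcc, mem_filter, mem_univ, true_and, mem_block]
      exact ⟨u, hu, v, hv, le_rfl, (huz.trans hzv).le⟩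
    · obtain ⟨w, hw, -, -, hwu, -⟩ := by simpa [spanIcc] using hu'
      exact (hinside w hw).1.not_ge hwu
  exact (card_lt_card hsub).not_ge (hmin z hz)

lemma exists_le_splitAt_of_exists_lt {a u v : α} (hrs : r ≤ s) (hv : r a v)
    (hA : ∀ z, r a z ↔ s a z ∧ u ≤ z ∧ z ≤ v) (hlt : ∃ z, s a z ∧ z < u) :
    ∃ q p, q < p ∧ s p q ∧ r ≤ splitAt s q p := by
  have hne : {z ∈ block s a | z < u}.Nonempty := by simpa [filter_nonempty_iff] using hlt
  obtain ⟨hqB, hqu⟩ := mem_filter.1 (max'_mem _ hne)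
  have hsv := ((hA v).1 hv).1
  refine ⟨_, v, hqu.trans_le ((hA v).1 hv).2.1, s.trans (s.symm hsv) (mem_block.1 hqB),
    le_splitAt (C := (r a ·)) hrs (fun _ _ => r.rel_congr_right) fun z => ?_⟩
  rw [hA z, s.rel_congr_left (s.symm hsv)]
  refine and_congr_right fun hz => and_congr_left fun _ => ⟨fun hqz => ?_, hqu.trans_le⟩
  exact not_lt.1 fun hzu => hqz.not_ge (le_max' _ _ (mem_filter.2 ⟨mem_block.2 hz, hzu⟩))

lemma exists_le_splitAt_of_forall_le {a u v : α} (hrs : r ≤ s) (hv : r a v)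
    (hA : ∀ z, r a z ↔ s a z ∧ u ≤ z ∧ z ≤ v) (hle : ∀ z, s a z → u ≤ z)
    (hw : ∃ w, s a w ∧ ¬r a w) : ∃ q p, q < p ∧ s p q ∧ r ≤ splitAt s q p := by
  obtain ⟨w, hsw, hrw⟩ := hw
  have habove : ∀ z, s a z → (¬r a z ↔ v < z) := fun z hz => by simp [hA z, hz, hle z hz]
  have hB : (block s a).Nonempty := ⟨a, self_mem_block s a⟩
  have hp : s a ((block s a).max' hB) := mem_block.1 (max'_mem _ hB)
  refine ⟨v, _, ((habove w hsw).1 hrw).trans_le (le_max' _ _ (mem_block.2 hsw)),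
    s.trans (s.symm hp) ((hA v).1 hv).1, le_splitAt (C := fun z => s a z ∧ ¬r a z) hrs
    (fun _ _ hzw => and_congr (s.rel_congr_right (hrs hzw)) (not_congr (r.rel_congr_right hzw)))
    fun z => ?_⟩
  rw [s.rel_congr_left (s.symm hp)]
  exact ⟨fun ⟨hz, hvz, _⟩ => ⟨hz, (habove z hz).2 hvz⟩,
    fun ⟨hz, hnz⟩ => ⟨hz, (habove z hz).1 hnz, le_max' _ _ (mem_block.2 hz)⟩⟩

/-- Cut the block of `s` right next to a convex block of `r` inside it. -/
theorem _root_.Setoid.IsNoncrossing.exists_le_splitAt (hr : r.IsNoncrossing) (hrs : r ≤ s)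
    (hne : r ≠ s) : ∃ q p, q < p ∧ s p q ∧ r ≤ splitAt s q p := by
  obtain ⟨x, y, hsxy, hrxy⟩ : ∃ x y, s x y ∧ ¬r x y := by
    by_contra! h
    exact hne (le_antisymm hrs (Setoid.le_def.2 fun hxy => h _ _ hxy))
  obtain ⟨a, ha, hconv⟩ := hr.exists_convex_block (B := block s x) ⟨x, self_mem_block s x⟩
  have hxa := mem_block.1 ha
  have hA : (block r a).Nonempty := ⟨a, self_mem_block r a⟩
  have hu : r a ((block r a).min' hA) := mem_block.1 (min'_mem _ hA)
  have hv : r a ((block r a).max' hA) := mem_block.1 (max'_mem _ hA)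
  have hAeq : ∀ z, r a z ↔ s a z ∧ (block r a).min' hA ≤ z ∧ z ≤ (block r a).max' hA := by
    refine fun z => ⟨fun h => ⟨hrs h, min'_le _ _ (mem_block.2 h), le_max' _ _ (mem_block.2 h)⟩,
      fun ⟨hz, h₁, h₂⟩ => ?_⟩
    rcases h₁.lt_or_eq with h₁ | rfl
    · rcases h₂.lt_or_eq with h₂ | rfl
      · exact hconv hu hv (mem_block.2 (s.trans hxa hz)) h₁ h₂
      · exact hv
    · exact hu
  by_cases hlt : ∃ z, s a z ∧ z < (block r a).min' hA
  · exact exists_le_splitAt_of_exists_lt hrs hv hAeq hlt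
  · push Not at hlt
    refine exists_le_splitAt_of_forall_le hrs hv hAeq hlt (by_contra fun h => hrxy ?_)
    push Not at h
    exact r.trans (r.symm (h x (s.symm hxa))) (h y (s.trans (s.symm hxa) hsxy))

end Refinement

section LongCycle

variable {n : ℕ}

lemma absLe_antisymm {a b : Perm (Fin n)} (hab : absLe a b) (hba : absLe b a) : a = b := by
  unfold absLe at hab hba
  have h : reflLen (a⁻¹ * b) = 0 := by omega
  have := numCycles_le_card (a⁻¹ * b)
  rw [reflLen_eq_card_sub_numCycles, Fintype.card_fin] at *
  exact inv_mul_eq_one.1 (eq_one_of_numCycles_eq_card (by rw [Fintype.card_fin]; omega))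

lemma finRotate_eq_succPerm_top : finRotate n = succPerm ⊤ := by
  refine Equiv.ext fun x => ?_
  rw [succPerm_apply, show block ⊤ x = univ by ext; simp]
  cases n with
  | zero => exact x.elim0
  | succ m =>
    rcases eq_or_ne x (Fin.last m) with rfl | hx
    · rw [finRotate_last, succIn_of_forall_le univ_nonempty fun z _ => Fin.le_last z]
      exact ((min'_le _ (0 : Fin (m + 1)) (mem_univ _)).antisymm (Fin.zero_le _)).symm
    · rw [finRotate_apply, succIn_eq_of_lt (mem_univ _) (Fin.lt_add_one_iff.2
        (lt_of_le_of_ne (Fin.le_last x) hx)) fun z _ => Fin.add_one_le_of_lt]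

lemma reflLen_succPerm_splitAt {s : Setoid (Fin n)} {q p : Fin n} (hqp : q < p) (hpq : s p q) :
    reflLen (succPerm s) = reflLen (succPerm (splitAt s q p)) + 1 := by
  have hsplit : ¬splitAt s q p p q := fun h =>
    ((splitAt_iff.1 h).2.1 ⟨s.refl p, hqp, le_rfl⟩).2.1.false
  have hcount := numCycles_mul_swap_add_ite (succPerm (splitAt s q p)) p q
  rw [succPerm_splitAt_mul_swap hqp hpq, if_pos (sameCycle_succPerm_iff.2 hpq), if_neg (mt sameCycle_succPerm_iff.1 hsplit)]
    at hcount
  have := numCycles_le_card (succPerm (splitAt s q p))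
  rw [reflLen_eq_card_sub_numCycles, reflLen_eq_card_sub_numCycles]
  simp only [Fintype.card_fin] at this
  omega

theorem absLe_succPerm_of_le {r s : Setoid (Fin n)} (hr : r.IsNoncrossing) (hs : s.IsNoncrossing)
    (h : r ≤ s) : absLe (succPerm r) (succPerm s) := by
  induction hk : reflLen (succPerm s) using Nat.strong_induction_on generalizing s with
  | _ k ih =>
    rcases eq_or_ne r s with rfl | hne
    · exact absLe_refl _
    obtain ⟨q, p, hqp, hpq, hle⟩ := hr.exists_le_splitAt h hne
    have hlen := reflLen_succPerm_splitAt hqp hpq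
    have ih' := ih _ (by omega) (hs.splitAt q p) hle rfl
    rw [← succPerm_splitAt_mul_swap hqp hpq] at hlen ⊢
    exact absLe_mul_swap ih' hlen

theorem exists_eq_succPerm_of_absLe {s : Setoid (Fin n)} (hs : s.IsNoncrossing)
    {w : Perm (Fin n)} (h : absLe w (succPerm s)) :
    ∃ r : Setoid (Fin n), r.IsNoncrossing ∧ w = succPerm r := by
  refine absLe_induction (motive := fun a => ∃ r : Setoid (Fin n), r.IsNoncrossing ∧ a = succPerm r)
    ⟨s, hs, rfl⟩ (fun a p q hlen _ ⟨r, hr, ha⟩ => ?_) h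
  have hpq : p ≠ q := by
    rintro rfl
    rw [show swap p p = 1 from swap_self p, mul_one] at hlen
    omega
  have hrpq : r p q := sameCycle_succPerm_iff.1 (ha ▸ (sameCycle_mul_swap_of_reflLen hlen).1)
  obtain ⟨q', p', hsplit⟩ := exists_succPerm_mul_swap_eq hpq hrpq
  exact ⟨_, hr.splitAt q' p', by rw [← hsplit, ← ha, mul_swap_mul_self]⟩

theorem succPerm_sameCycle_setoid_of_absLe_finRotate {w : Perm (Fin n)}
    (h : absLe w (finRotate n)) :
    (SameCycle.setoid w).IsNoncrossing ∧ succPerm (SameCycle.setoid w) = w := by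
  rw [finRotate_eq_succPerm_top] at h
  obtain ⟨r, hr, rfl⟩ := exists_eq_succPerm_of_absLe isNoncrossing_top h
  rw [setoid_sameCycle_succPerm]
  exact ⟨hr, rfl⟩

theorem absLe_iff_sameCycle_setoid_le {a b : Perm (Fin n)} (ha : absLe a (finRotate n))
    (hb : absLe b (finRotate n)) : absLe a b ↔ SameCycle.setoid a ≤ SameCycle.setoid b := by
  refine ⟨fun h => Setoid.le_def.2 (sameCycle_of_absLe h), fun h => ?_⟩
  obtain ⟨hra, hsa⟩ := succPerm_sameCycle_setoid_of_absLe_finRotate ha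
  obtain ⟨hrb, hsb⟩ := succPerm_sameCycle_setoid_of_absLe_finRotate hb
  rw [← hsa, ← hsb]
  exact absLe_succPerm_of_le hra hrb h

end LongCycle

end AbsoluteOrder

namespace Finpartition

variable {α : Type*} [Fintype α] [DecidableEq α]

lemma le_iff_part_subset {P Q : Finpartition (univ : Finset α)} :
    P ≤ Q ↔ ∀ a, P.part a ⊆ Q.part a := by
  refine ⟨fun h a => ?_, fun h b hb => ?_⟩
  · obtain ⟨c, hc, hac⟩ := h (P.part_mem.2 (mem_univ a))
    rwa [Q.part_eq_of_mem hc (hac (P.mem_part (mem_univ a)))]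
  · obtain ⟨a, ha⟩ := P.nonempty_of_mem_parts hb
    exact ⟨Q.part a, Q.part_mem.2 (mem_univ a), P.part_eq_of_mem hb ha ▸ h a⟩

lemma ofSetoid_le_ofSetoid_iff {r s : Setoid α} [DecidableRel r.r] [DecidableRel s.r] :
    ofSetoid r ≤ ofSetoid s ↔ r ≤ s := by
  simp only [le_iff_part_subset, subset_iff, mem_part_ofSetoid_iff_rel, Setoid.le_def]

lemma exists_eq_ofSetoid (P : Finpartition (univ : Finset α)) :
    ∃ (r : Setoid α) (_ : DecidableRel r.r), ofSetoid r = P := by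
  refine ⟨Setoid.ker P.part, fun a b => decEq (P.part a) (P.part b), le_antisymm ?_ ?_⟩ <;>
  · refine le_iff_part_subset.2 fun a b hb => ?_
    simp_all [mem_part_ofSetoid_iff_rel, Setoid.ker_def,
      P.mem_part_iff_part_eq_part (mem_univ b) (mem_univ a), eq_comm]

end Finpartition

section Noncrossing

variable {n : ℕ}

lemma isNoncrossing_iff_part {P : Finpartition (univ : Finset (Fin n))} :
    IsNoncrossing P ↔ ∀ ⦃i j k l⦄, i < j → j < k → k < l →
      k ∈ P.part i → l ∈ P.part j → j ∈ P.part i := by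
  refine ⟨fun h i j k l hij hjk hkl hk hl => by_contra fun hj => h ?_, ?_⟩
  · exact ⟨i, j, k, l, P.part i, P.part j, hij, hjk, hkl, P.part_mem.2 (mem_univ i),
      P.part_mem.2 (mem_univ j), fun e => hj (e ▸ P.mem_part (mem_univ j)),
      P.mem_part (mem_univ i), hk, P.mem_part (mem_univ j), hl⟩
  · rintro h ⟨i, j, k, l, B₁, B₂, hij, hjk, hkl, hB₁, hB₂, hne, hi, hk, hj, hl⟩
    rw [← P.part_eq_of_mem hB₁ hi] at hk
    rw [← P.part_eq_of_mem hB₂ hj] at hl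
    have hj₁ := P.part_eq_of_mem hB₁ (P.part_eq_of_mem hB₁ hi ▸ h hij hjk hkl hk hl)
    exact hne (hj₁.symm.trans (P.part_eq_of_mem hB₂ hj))

lemma isNoncrossing_ofSetoid_iff {r : Setoid (Fin n)} [DecidableRel r.r] :
    IsNoncrossing (Finpartition.ofSetoid r) ↔ r.IsNoncrossing := by
  simp only [isNoncrossing_iff_part, Finpartition.mem_part_ofSetoid_iff_rel]
  rfl

end Noncrossing

end

open AbsoluteOrder Finpartition

/-- In `S_n` with the long cycle `c = (1,2,…,n)`, the interval `[e, c]`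
in absolute order is isomorphic, as a poset, to the lattice of noncrossing partitions of
`{1,…,n}` ordered by refinement. -/
theorem absolute_interval_iso_noncrossing_partitions (n : ℕ) :
    ∃ f : {w : Perm (Fin n) // absLe w (finRotate n)} ≃
        {P : Finpartition (Finset.univ : Finset (Fin n)) // IsNoncrossing P},
      ∀ a b : {w : Perm (Fin n) // absLe w (finRotate n)},
        absLe a.1 b.1 ↔ (f a).1 ≤ (f b).1 := by
  classical
  let f (w : {w // absLe w (finRotate n)}) : {P : Finpartition univ // IsNoncrossing P} :=
    ⟨ofSetoid (SameCycle.setoid w.1),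
      isNoncrossing_ofSetoid_iff.2 (succPerm_sameCycle_setoid_of_absLe_finRotate w.2).1⟩
  have hf (a b : {w // absLe w (finRotate n)}) : absLe a.1 b.1 ↔ (f a).1 ≤ (f b).1 :=
    (absLe_iff_sameCycle_setoid_le a.2 b.2).trans ofSetoid_le_ofSetoid_iff.symm
  refine ⟨Equiv.ofBijective f ⟨fun a b hab => ?_, fun ⟨P, hP⟩ => ?_⟩, hf⟩
  · exact Subtype.ext (absLe_antisymm ((hf a b).2 (congrArg Subtype.val hab).le)
      ((hf b a).2 (congrArg Subtype.val hab).ge))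
  · obtain ⟨r, _, rfl⟩ := exists_eq_ofSetoid P
    have hr := isNoncrossing_ofSetoid_iff.1 hP
    have hc : absLe (succPerm r) (finRotate n) :=
      finRotate_eq_succPerm_top (n := n) ▸ absLe_succPerm_of_le hr isNoncrossing_top le_top
    exact ⟨⟨succPerm r, hc⟩, Subtype.ext (by simp only [f, setoid_sameCycle_succPerm])⟩
end

section
/- In S_n with Coxeter element c = (1,2,…,n), the lexicographic order on transpositions, (i,j) ≺ (k,l) iff i < k or (i = k and j < l), is a reflection ordering compatible with c: for every rank-2 noncrossing element w ∈ NC₂ with reflections of its parabolic subgroup listed in increasing order u₁ ≺ ⋯ ≺ u_m, one has w = u_i u_{i−1} for all 1 ≤ i ≤ m (indices mod m). -/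
/-!
Write `w = t u` with `t, u` transpositions. If `t, u` are disjoint, they are the only
transpositions below `w` and they commute, so both cyclic products equal `w`. Otherwise `w` is a
3-cycle on some `a < b < c`, all three transpositions lie below it, and in lexicographic order they
are `(a b) ≺ (a c) ≺ (b c)`. When `w` is `a ↦ b ↦ c ↦ a`, the required identities are
`(a b)(b c) = (a c)(a b) = (b c)(a c) = w`.

The other orientation `a ↦ c ↦ b ↦ a` is never below `γ = finRotate n`. In the permutation
representation on `ℚⁿ`, `rank (σ - 1) ≤ ℓ_T(σ)`, since each transposition raises the rank by at
most one. Every `w⁻¹ γ`-invariant function turns out to be constant, so `ℓ_T(w⁻¹ γ) ≥ n - 1`.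
Together with `ℓ_T(γ) ≤ n`, this contradicts `2 + ℓ_T(w⁻¹ γ) = ℓ_T(γ)`.
-/

open Equiv

/-- The lexicographic order on transpositions: `(i,j) ≺ (k,l)` iff `i < k` or
(`i = k` and `j < l`), where each transposition is written with its smaller entry first. -/
def lexLt {n : ℕ} (t u : Perm (Fin n)) : Prop :=
  ∃ i j a b : Fin n, i < j ∧ a < b ∧ t = swap i j ∧ u = swap a b ∧
    (i < a ∨ (i = a ∧ j < b))

open Equiv.Perm Finset

section Swap

variable {α : Type*} [DecidableEq α]

lemma Equiv.Perm.IsSwap.eq_swap_of_apply {s : Perm α} {x y : α} (hs : s.IsSwap) (hxy : x ≠ y)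
    (h : s x = y) : s = swap x y := by
  obtain ⟨u, v, -, rfl⟩ := hs
  rw [swap_apply_def] at h
  split_ifs at h with hu hv <;> subst_vars
  exacts [rfl, swap_comm _ _, absurd rfl hxy]

lemma not_isSwap_of_apply_ne {σ : Perm α} {x y z : α} (hxy : x ≠ y) (hxz : x ≠ z) (hyz : y ≠ z)
    (hx : σ x ≠ x) (hy : σ y ≠ y) (hz : σ z ≠ z) : ¬ σ.IsSwap := by
  rintro ⟨u, v, -, rfl⟩
  have hmoved : ∀ t, swap u v t ≠ t → t = u ∨ t = v := fun t ht => by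
    by_contra! h
    exact ht (swap_apply_of_ne_of_ne h.1 h.2)
  rcases hmoved x hx with rfl | rfl <;> rcases hmoved y hy with rfl | rfl <;>
    rcases hmoved z hz with rfl | rfl <;> simp_all

lemma swap_mul_swap_cyclic {a b c : α} (hab : a ≠ b) (hbc : b ≠ c) (hac : a ≠ c) :
    swap a c * swap a b = swap a b * swap b c ∧ swap b c * swap a c = swap a b * swap b c := by
  constructor <;> ext k <;> simp only [Perm.mul_apply, swap_apply_def] <;> grind

lemma apply_ne_of_isSwap_swap_mul {w : Perm α} {x y : α} (hxy : x ≠ y) (hw : w ≠ 1)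
    (h : (swap x y * w).IsSwap) : w x ≠ x := by
  intro hx
  have : swap x y * w = swap x y := h.eq_swap_of_apply hxy (by simp [hx])
  exact hw (mul_left_cancel (this.trans (mul_one _).symm))

lemma eq_apply_of_isSwap_swap_mul {w : Perm α} (hw : ∀ z, w (w z) = z) {x y : α} (hxy : x ≠ y)
    (hx : w x ≠ x) (hy : w y ≠ y) (h : (swap x y * w).IsSwap) : y = w x := by
  by_contra hne
  have hyx : w y ≠ x := fun h' => hne (by rw [← h', hw])
  refine not_isSwap_of_apply_ne hxy hx.symm hne ?_ ?_ ?_ h <;>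
    simp [swap_apply_of_ne_of_ne, hx, hy, hyx, hw, hne, Ne.symm hne]

lemma isSwap_and_isSwap_mul_swap_mul_swap_iff {a b c : α} (hab : a ≠ b) (hbc : b ≠ c)
    (hac : a ≠ c) {t : Perm α} :
    t.IsSwap ∧ (t * (swap a b * swap b c)).IsSwap ↔ t = swap a b ∨ t = swap a c ∨ t = swap b c := by
  constructor
  · rintro ⟨⟨x, y, hxy, rfl⟩, h⟩
    have hw : swap a b * swap b c ≠ 1 := fun h1 =>
      hac (by simpa [swap_apply_of_ne_of_ne hac hab] using congrArg (· c) h1)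
    have hsupp : ∀ z, (swap a b * swap b c) z ≠ z → z = a ∨ z = b ∨ z = c := fun z hz => by
      by_contra! h'
      exact hz (by rw [Perm.mul_apply, swap_apply_of_ne_of_ne h'.2.1 h'.2.2,
        swap_apply_of_ne_of_ne h'.1 h'.2.1])
    have hx := hsupp x (apply_ne_of_isSwap_swap_mul hxy hw h)
    have hy := hsupp y (apply_ne_of_isSwap_swap_mul hxy.symm hw (swap_comm x y ▸ h))
    rcases hx with rfl | rfl | rfl <;> rcases hy with rfl | rfl | rfl <;> simp_all [swap_comm]
  · rintro (rfl | rfl | rfl)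
    · exact ⟨⟨a, b, hab, rfl⟩, b, c, hbc, by simp [← mul_assoc]⟩
    · refine ⟨⟨a, c, hac, rfl⟩, a, b, hab, ?_⟩
      rw [← (swap_mul_swap_cyclic hab hbc hac).1, ← mul_assoc, swap_mul_self, one_mul]
    · refine ⟨⟨b, c, hbc, rfl⟩, a, c, hac, ?_⟩
      rw [← (swap_mul_swap_cyclic hab hbc hac).2, ← mul_assoc, swap_mul_self, one_mul]

lemma isSwap_and_isSwap_mul_swap_mul_swap_iff_of_nodup {p q r s : α} (h : [p, q, r, s].Nodup)
    {t : Perm α} :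
    t.IsSwap ∧ (t * (swap p q * swap r s)).IsSwap ↔ t = swap p q ∨ t = swap r s := by
  have hcomm : Commute (swap p q) (swap r s) := (disjoint_swap_swap h).commute
  simp only [List.nodup_cons, List.mem_cons, not_or, List.not_mem_nil,
    not_false_eq_true, List.nodup_nil, and_true] at h
  obtain ⟨⟨hpq, hpr, hps⟩, ⟨hqr, hqs⟩, hrs⟩ := h
  constructor
  · rintro ⟨⟨x, y, hxy, rfl⟩, h⟩
    have hw : swap p q * swap r s ≠ 1 := fun h1 =>
      hpq (by simpa [swap_apply_of_ne_of_ne hpr hps] using (congrArg (· p) h1).symm)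
    have hinv : ∀ z, (swap p q * swap r s) ((swap p q * swap r s) z) = z := fun z => by
      simp only [Perm.mul_apply, swap_apply_def]
      grind
    have hsupp : ∀ z, (swap p q * swap r s) z ≠ z → z = p ∨ z = q ∨ z = r ∨ z = s :=
      fun z hz => by
        by_contra! h'
        exact hz (by rw [Perm.mul_apply, swap_apply_of_ne_of_ne h'.2.2.1 h'.2.2.2,
          swap_apply_of_ne_of_ne h'.1 h'.2.1])
    have hx := apply_ne_of_isSwap_swap_mul hxy hw h
    have hy := apply_ne_of_isSwap_swap_mul hxy.symm hw (swap_comm x y ▸ h)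
    obtain rfl := eq_apply_of_isSwap_swap_mul hinv hxy hx hy h
    rcases hsupp x hx with rfl | rfl | rfl | rfl <;>
      simp [swap_apply_of_ne_of_ne, swap_comm, *, Ne.symm hpr, Ne.symm hps, Ne.symm hqr,
        Ne.symm hqs]
  · rintro (rfl | rfl)
    · exact ⟨⟨p, q, hpq, rfl⟩, r, s, hrs, by simp [← mul_assoc]⟩
    · exact ⟨⟨r, s, hrs, rfl⟩, p, q, hpq, by rw [hcomm.eq]; simp [← mul_assoc]⟩

end Swap

section Normalization

variable {α : Type*} [LinearOrder α]

lemma exists_lt_lt_swap_mul_swap_eq {x y z : α} (hxy : x ≠ y) (hyz : y ≠ z) (hxz : x ≠ z) :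
    ∃ a b c, a < b ∧ b < c ∧
      (swap x y * swap y z = swap a b * swap b c ∨ swap x y * swap y z = swap b c * swap a b) := by
  rcases hxy.lt_or_gt with h1 | h1 <;> rcases hyz.lt_or_gt with h2 | h2 <;>
    rcases hxz.lt_or_gt with h3 | h3
  · exact ⟨x, y, z, h1, h2, Or.inl rfl⟩
  · exact absurd (h1.trans h2) h3.not_gt
  · refine ⟨x, z, y, h3, h2, Or.inr ?_⟩
    ext k; simp only [Perm.mul_apply, swap_apply_def]; grind
  · refine ⟨z, x, y, h3, h1, Or.inl ?_⟩
    ext k; simp only [Perm.mul_apply, swap_apply_def]; grind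
  · refine ⟨y, x, z, h1, h3, Or.inr ?_⟩
    ext k; simp only [Perm.mul_apply, swap_apply_def]; grind
  · refine ⟨y, z, x, h2, h3, Or.inl ?_⟩
    ext k; simp only [Perm.mul_apply, swap_apply_def]; grind
  · exact absurd (h2.trans h1) h3.not_gt
  · refine ⟨z, y, x, h2, h1, Or.inr ?_⟩
    ext k; simp only [Perm.mul_apply, swap_apply_def]; grind

lemma swap_mul_swap_cases {t u : Perm α} (ht : t.IsSwap) (hu : u.IsSwap) :
    t * u = 1 ∨ (∃ p q r s, [p, q, r, s].Nodup ∧ t * u = swap p q * swap r s) ∨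
      ∃ a b c, a < b ∧ b < c ∧ (t * u = swap a b * swap b c ∨ t * u = swap b c * swap a b) := by
  obtain ⟨x, y, hxy, rfl⟩ := ht
  obtain ⟨z, v, hzv, rfl⟩ := hu
  by_cases hone : swap x y * swap z v = 1
  · exact Or.inl hone
  by_cases hshared : x = z ∨ x = v ∨ y = z ∨ y = v
  · refine Or.inr (Or.inr ?_)
    obtain ⟨x', y', z', h1, h2, h3, he⟩ : ∃ x' y' z', x' ≠ y' ∧ y' ≠ z' ∧ x' ≠ z' ∧
        swap x y * swap z v = swap x' y' * swap y' z' := by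
      rcases hshared with rfl | rfl | rfl | rfl
      · exact ⟨y, x, v, hxy.symm, hzv, fun h => hone (by rw [← h, swap_mul_self]),
          by rw [swap_comm]⟩
      · exact ⟨y, x, z, hxy.symm, hzv.symm,
          fun h => hone (by rw [← h, swap_comm y, swap_mul_self]),
          by rw [swap_comm x y, swap_comm z x]⟩
      · exact ⟨x, y, v, hxy, hzv, fun h => hone (by rw [h, swap_comm, swap_mul_self]), rfl⟩
      · exact ⟨x, y, z, hxy, hzv.symm, fun h => hone (by rw [h, swap_mul_self]),
          by rw [swap_comm z y]⟩
    rw [he]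
    exact exists_lt_lt_swap_mul_swap_eq h1 h2 h3
  · simp only [not_or] at hshared
    exact Or.inr (Or.inl ⟨x, y, z, v, by simp [*], rfl⟩)

end Normalization

section ReflLen

variable {n : ℕ}

lemma exists_swap_factors_length_eq_reflLen (σ : Perm (Fin n)) :
    ∃ l : List (Perm (Fin n)), (∀ t ∈ l, t.IsSwap) ∧ l.length = reflLen σ ∧ l.prod = σ := by
  obtain ⟨l, hprod, hswap⟩ := (truncSwapFactors σ).out
  exact Nat.sInf_mem (s := {k | ∃ l : List (Perm (Fin n)), (∀ t ∈ l, t.IsSwap) ∧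
    l.length = k ∧ l.prod = σ}) ⟨l.length, l, hswap, rfl, hprod⟩

lemma reflLen_le_length {σ : Perm (Fin n)} {l : List (Perm (Fin n))} (hl : ∀ t ∈ l, t.IsSwap)
    (hprod : l.prod = σ) : reflLen σ ≤ l.length :=
  Nat.sInf_le ⟨l, hl, rfl, hprod⟩

lemma reflLen_one : reflLen (1 : Perm (Fin n)) = 0 :=
  Nat.le_zero.1 (reflLen_le_length (l := []) (by simp) rfl)

lemma reflLen_eq_zero_iff {σ : Perm (Fin n)} : reflLen σ = 0 ↔ σ = 1 := by
  refine ⟨fun h => ?_, fun h => h ▸ reflLen_one⟩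
  obtain ⟨l, -, hlen, rfl⟩ := exists_swap_factors_length_eq_reflLen σ
  rw [h, List.length_eq_zero_iff] at hlen
  simp [hlen]

lemma reflLen_eq_one_iff {σ : Perm (Fin n)} : reflLen σ = 1 ↔ σ.IsSwap := by
  constructor
  · intro h
    obtain ⟨l, hl, hlen, rfl⟩ := exists_swap_factors_length_eq_reflLen σ
    obtain ⟨t, rfl⟩ := List.length_eq_one_iff.1 (hlen.trans h)
    simpa using hl
  · intro hσ
    have hle : reflLen σ ≤ 1 := reflLen_le_length (l := [σ]) (by simpa) (by simp)
    have hne : reflLen σ ≠ 0 := by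
      obtain ⟨x, y, hxy, rfl⟩ := hσ
      simpa [reflLen_eq_zero_iff] using hxy
    omega

lemma reflLen_mul_le (σ τ : Perm (Fin n)) : reflLen (σ * τ) ≤ reflLen σ + reflLen τ := by
  obtain ⟨l, hl, hlen, rfl⟩ := exists_swap_factors_length_eq_reflLen σ
  obtain ⟨l', hl', hlen', rfl⟩ := exists_swap_factors_length_eq_reflLen τ
  rw [← hlen, ← hlen', ← List.length_append, ← List.prod_append]
  exact reflLen_le_length (by simpa [or_imp, forall_and] using ⟨hl, hl'⟩) rfl

lemma reflLen_le_card_support (σ : Perm (Fin n)) : reflLen σ ≤ #σ.support := by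
  induction hk : #σ.support using Nat.strong_induction_on generalizing σ with
  | _ k ih =>
    rcases eq_or_ne σ 1 with rfl | hσ
    · simp [reflLen_one]
    obtain ⟨x, hx⟩ : ∃ x, σ x ≠ x := by
      by_contra! h
      exact hσ (Perm.ext h)
    have hlt := card_support_swap_mul hx
    calc reflLen σ = reflLen (swap x (σ x) * (swap x (σ x) * σ)) := by
          rw [← mul_assoc, swap_mul_self, one_mul]
      _ ≤ 1 + reflLen (swap x (σ x) * σ) :=
          (reflLen_mul_le _ _).trans_eq (by rw [reflLen_eq_one_iff.2 ⟨x, σ x, hx.symm, rfl⟩])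
      _ ≤ 1 + #(swap x (σ x) * σ).support := by gcongr; exact ih _ (hk ▸ hlt) _ rfl
      _ ≤ k := by omega

lemma exists_isSwap_mul_eq_of_reflLen_eq_two {w : Perm (Fin n)} (hw : reflLen w = 2) :
    ∃ t u : Perm (Fin n), t.IsSwap ∧ u.IsSwap ∧ t * u = w := by
  obtain ⟨l, hl, hlen, rfl⟩ := exists_swap_factors_length_eq_reflLen w
  obtain ⟨t, u, rfl⟩ := List.length_eq_two.1 (hlen.trans hw)
  exact ⟨t, u, hl t (by simp), hl u (by simp), by simp⟩

lemma absLe_iff_isSwap_mul {t w : Perm (Fin n)} (ht : t.IsSwap) (hw : reflLen w = 2) :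
    absLe t w ↔ (t * w).IsSwap := by
  obtain ⟨x, y, hxy, rfl⟩ := ht
  rw [absLe, reflLen_eq_one_iff.2 ⟨x, y, hxy, rfl⟩, hw, swap_inv, ← reflLen_eq_one_iff]
  omega

end ReflLen

lemma finrank_span_singleton_le_one {R M : Type*} [Ring R] [StrongRankCondition R]
    [AddCommGroup M] [Module R M] (v : M) : Module.finrank R (Submodule.span R {v}) ≤ 1 :=
  (finrank_span_le_card ({v} : Set M)).trans_eq (by simp)

section RankSubId

variable {α : Type*}

noncomputable def funLeftSubId (σ : Perm α) : (α → ℚ) →ₗ[ℚ] (α → ℚ) :=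
  LinearMap.funLeft ℚ ℚ σ - LinearMap.id

noncomputable def rankSubId (σ : Perm α) : ℕ :=
  Module.finrank ℚ (LinearMap.range (funLeftSubId σ))

lemma funLeftSubId_apply (σ : Perm α) (v : α → ℚ) : funLeftSubId σ v = v ∘ σ - v := rfl

lemma rankSubId_one : rankSubId (1 : Perm α) = 0 := by
  have : funLeftSubId (1 : Perm α) = 0 := by ext; simp [funLeftSubId_apply]
  rw [rankSubId, this, LinearMap.range_zero, finrank_bot]

lemma rankSubId_swap_le [DecidableEq α] (x y : α) : rankSubId (swap x y) ≤ 1 := by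
  set g : α → ℚ := Pi.single x 1 - Pi.single y 1
  have hrange : LinearMap.range (funLeftSubId (swap x y)) ≤ Submodule.span ℚ {g} := by
    rintro - ⟨v, rfl⟩
    refine Submodule.mem_span_singleton.2 ⟨v y - v x, funext fun z => ?_⟩
    simp only [g, funLeftSubId_apply, Pi.sub_apply, Pi.smul_apply, Pi.single_apply, smul_eq_mul,
      Function.comp_apply, swap_apply_def]
    split_ifs <;> simp_all
  exact (Submodule.finrank_mono hrange).trans (finrank_span_singleton_le_one g)

lemma rankSubId_mul_le [Finite α] (σ τ : Perm α) :
    rankSubId (σ * τ) ≤ rankSubId σ + rankSubId τ := by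
  have hD : funLeftSubId (σ * τ) =
      (LinearMap.funLeft ℚ ℚ τ).comp (funLeftSubId σ) + funLeftSubId τ := by
    ext v x
    simp [funLeftSubId_apply]
  calc rankSubId (σ * τ)
      ≤ Module.finrank ℚ ↥(LinearMap.range ((LinearMap.funLeft ℚ ℚ τ).comp (funLeftSubId σ)) ⊔
          LinearMap.range (funLeftSubId τ)) := by
        rw [rankSubId, hD]
        exact Submodule.finrank_mono (LinearMap.range_add_le _ _)
    _ ≤ Module.finrank ℚ (LinearMap.range ((LinearMap.funLeft ℚ ℚ τ).comp (funLeftSubId σ))) +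
          rankSubId τ := Submodule.finrank_add_le_finrank_add_finrank _ _
    _ ≤ rankSubId σ + rankSubId τ := by
        rw [LinearMap.range_comp]
        gcongr
        exact Submodule.finrank_map_le _ _

lemma card_le_rankSubId_add_one [Fintype α] {σ : Perm α}
    (h : ∀ v : α → ℚ, v ∘ σ = v → ∃ k, v = fun _ => k) : Fintype.card α ≤ rankSubId σ + 1 := by
  have hker : LinearMap.ker (funLeftSubId σ) ≤ Submodule.span ℚ {fun _ => (1 : ℚ)} := by
    intro v hv
    obtain ⟨k, rfl⟩ := h v (sub_eq_zero.1 hv)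
    exact Submodule.mem_span_singleton.2 ⟨k, by ext; simp⟩
  have hrank := LinearMap.finrank_range_add_finrank_ker (funLeftSubId σ)
  rw [Module.finrank_fintype_fun_eq_card] at hrank
  have := (Submodule.finrank_mono hker).trans (finrank_span_singleton_le_one _)
  rw [rankSubId]
  omega

lemma rankSubId_le_reflLen {n : ℕ} (σ : Perm (Fin n)) : rankSubId σ ≤ reflLen σ := by
  obtain ⟨l, hl, hlen, rfl⟩ := exists_swap_factors_length_eq_reflLen σ
  rw [← hlen]
  clear hlen
  induction l with
  | nil => simp [rankSubId_one]
  | cons t l ih =>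
    obtain ⟨x, y, -, rfl⟩ := hl t (by simp)
    rw [List.prod_cons, List.length_cons]
    have := rankSubId_swap_le x y
    have := ih fun u hu => hl u (by simp [hu])
    have := rankSubId_mul_le (swap x y) l.prod
    omega

end RankSubId

lemma apply_eq_apply_of_forall_succ {β : Type*} (g : ℕ → β) {i j : ℕ} (hij : i ≤ j)
    (h : ∀ k, i ≤ k → k < j → g (k + 1) = g k) : g j = g i := by
  induction j, hij using Nat.le_induction with
  | base => rfl
  | succ j hij ih => rw [h j hij (by omega), ih fun k hk hkj => h k hk (by omega)]

open Fin.NatCast in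
lemma apply_eq_of_comp_mul_finRotate_eq {m : ℕ} {a b c : Fin (m + 1)} (hab : a < b) (hbc : b < c)
    {v : Fin (m + 1) → ℚ} (hv : v ∘ (swap a b * swap b c * finRotate (m + 1)) = v)
    (x : Fin (m + 1)) : v x = v a := by
  have hab' : (a : ℕ) < b := hab
  have hbc' : (b : ℕ) < c := hbc
  have hcm : (c : ℕ) ≤ m := Nat.lt_succ_iff.1 c.isLt
  set g : ℕ → ℚ := fun k => v k
  -- `v` is constant on each of the arcs `[0, a)`, `[a, b)`, `[b, c)`, `[c, m]`; the jumps at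
  -- `b` and `c` and the wrap-around from `m` to `0` identify the four values.
  have hvg : ∀ y : Fin (m + 1), v y = g y := fun y => by simp [g]
  have hshift : ∀ k, v ((swap a b * swap b c) ((k + 1 : ℕ) : Fin (m + 1))) = g k := by
    intro k
    simpa using congrFun hv k
  have hcast : ∀ k ≤ m, ∀ y : Fin (m + 1), ((k : Fin (m + 1)) = y ↔ k = y) := fun k hk y => by
    rw [Fin.ext_iff, Fin.val_cast_of_lt (by omega)]
  have hfix : ∀ y, y ≠ a → y ≠ b → y ≠ c → (swap a b * swap b c) y = y := fun y ha hb hc => by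
    rw [Perm.mul_apply, swap_apply_of_ne_of_ne hb hc, swap_apply_of_ne_of_ne ha hb]
  have hstep : ∀ k, k < m → k + 1 ≠ a → k + 1 ≠ b → k + 1 ≠ c → g (k + 1) = g k := by
    intro k hk ha hb hc
    rw [← hshift k, hfix] <;> rwa [Ne, hcast _ hk]
  have hjump_b : g c = g (b - 1) := by
    rw [← hshift (b - 1), Nat.sub_add_cancel (by omega), (hcast _ (by omega) b).2 rfl,
      Perm.mul_apply, swap_apply_left, swap_apply_of_ne_of_ne (hab.trans hbc).ne' hbc.ne', hvg]
  have hjump_c : g a = g (c - 1) := by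
    rw [← hshift (c - 1), Nat.sub_add_cancel (by omega), (hcast _ (by omega) c).2 rfl,
      Perm.mul_apply, swap_apply_right, swap_apply_right, hvg]
  have hwrap : 0 < (a : ℕ) → g 0 = g m := by
    intro ha
    rw [← hshift m, Fin.natCast_self, hfix]
    · simp [g]
    all_goals exact Fin.ne_of_val_ne (by rw [Fin.val_zero]; omega)
  have hseg : ∀ i j, i ≤ j → j ≤ m → (∀ k, i < k → k ≤ j → k ≠ a ∧ k ≠ b ∧ k ≠ c) →
      g j = g i := fun i j hij hjm h =>
    apply_eq_apply_of_forall_succ g hij fun k hik hkj =>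
      hstep k (by omega) (h _ (by omega) hkj).1 (h _ (by omega) hkj).2.1 (h _ (by omega) hkj).2.2
  have hA : g (b - 1) = g a := hseg a (b - 1) (by omega) (by omega) fun k _ _ => by omega
  have hB : g (c - 1) = g b := hseg b (c - 1) (by omega) (by omega) fun k _ _ => by omega
  have hC : g m = g c := hseg c m hcm le_rfl fun k _ _ => by omega
  have hk : ∀ k ≤ m, g k = g a := by
    intro k hk
    rcases lt_or_ge k a with h | h
    · rw [hseg 0 k (by omega) hk fun l _ _ => by omega, hwrap (by omega), hC, hjump_b, hA]
    rcases lt_or_ge k b with h' | h'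
    · exact hseg a k h hk fun l _ _ => by omega
    rcases lt_or_ge k c with h'' | h''
    · rw [hseg b k h' hk fun l _ _ => by omega, ← hB, ← hjump_c]
    · rw [hseg c k h'' hk fun l _ _ => by omega, hjump_b, hA]
  rw [hvg, hvg a, hk x (Nat.lt_succ_iff.1 x.isLt)]

lemma not_absLe_finRotate {n : ℕ} {a b c : Fin n} (hab : a < b) (hbc : b < c)
    (hw : reflLen (swap b c * swap a b) = 2) : ¬ absLe (swap b c * swap a b) (finRotate n) := by
  obtain ⟨m, rfl⟩ : ∃ m, n = m + 1 := Nat.exists_eq_add_one.2 a.pos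
  set σ := (swap b c * swap a b)⁻¹ * finRotate (m + 1)
  have hσ : σ = swap a b * swap b c * finRotate (m + 1) := by simp [σ]
  have hcard : m + 1 ≤ rankSubId σ + 1 := by
    simpa using card_le_rankSubId_add_one fun v hv =>
      ⟨v a, funext (apply_eq_of_comp_mul_finRotate_eq hab hbc (hσ ▸ hv))⟩
  have hrank := rankSubId_le_reflLen σ
  have hrot := (reflLen_le_card_support (finRotate (m + 1))).trans (card_le_univ _)
  rw [absLe, hw]
  change ¬ 2 + reflLen σ = _
  simp only [Fintype.card_fin] at hrot
  omega

section LexOrder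

variable {n : ℕ}

lemma eq_and_eq_of_swap_eq_swap {i j a b : Fin n} (hij : i < j) (hab : a < b)
    (h : swap i j = swap a b) : i = a ∧ j = b := by
  have hi : swap a b i = j := by rw [← h, swap_apply_left]
  rw [swap_apply_def] at hi
  split_ifs at hi with hia hib
  · exact ⟨hia, hi.symm⟩
  · subst hi hib; exact absurd (hij.trans hab) (lt_irrefl _)
  · exact absurd hi hij.ne

lemma lexLt_swap_swap_iff {i j a b : Fin n} (hij : i < j) (hab : a < b) :
    lexLt (swap i j) (swap a b) ↔ toLex (i, j) < toLex (a, b) := by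
  rw [Prod.Lex.lt_iff]
  constructor
  · rintro ⟨i', j', a', b', hij', hab', he, he', h⟩
    obtain ⟨rfl, rfl⟩ := eq_and_eq_of_swap_eq_swap hij hij' he
    obtain ⟨rfl, rfl⟩ := eq_and_eq_of_swap_eq_swap hab hab' he'
    exact h
  · exact fun h => ⟨i, j, a, b, hij, hab, rfl, rfl, h⟩

instance : IsStrictOrder (Perm (Fin n)) lexLt where
  irrefl t h := by
    obtain ⟨i, j, -, -, hij, -, rfl, -, -⟩ := id h
    exact lt_irrefl _ ((lexLt_swap_swap_iff hij hij).1 h)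
  trans t u s h h' := by
    obtain ⟨i, j, a, b, hij, hab, rfl, rfl, -⟩ := id h
    obtain ⟨-, -, c, d, -, hcd, -, rfl, -⟩ := id h'
    rw [lexLt_swap_swap_iff hij hab] at h
    rw [lexLt_swap_swap_iff hab hcd] at h'
    exact (lexLt_swap_swap_iff hij hcd).2 (h.trans h')

lemma forall_mem_zip_rotate_of_lt_lt {a b c : Fin n} (hab : a < b) (hbc : b < c)
    {l : List (Perm (Fin n))} (hl : l.Pairwise lexLt)
    (hmem : ∀ t, t ∈ l ↔ t = swap a b ∨ t = swap a c ∨ t = swap b c) :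
    ∀ p ∈ l.zip (l.rotate (l.length - 1)), p.1 * p.2 = swap a b * swap b c := by
  have hac := hab.trans hbc
  obtain rfl : l = [swap a b, swap a c, swap b c] := by
    refine hl.eq_of_mem_iff ?_ (by simpa using hmem)
    simp [lexLt_swap_swap_iff, hab, hbc, hac, Prod.Lex.lt_iff]
  simpa using swap_mul_swap_cyclic hab.ne hbc.ne hac.ne

end LexOrder

lemma forall_mem_zip_rotate_of_mem_iff_pair {M : Type*} [Monoid M] {t u : M} (htu : Commute t u)
    (hne : t ≠ u) {l : List M} (hl : l.Nodup) (hmem : ∀ x, x ∈ l ↔ x = t ∨ x = u) :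
    ∀ p ∈ l.zip (l.rotate (l.length - 1)), p.1 * p.2 = t * u := by
  have hperm : l.Perm [t, u] :=
    (List.perm_ext_iff_of_nodup hl (by simp [hne])).2 (by simpa using hmem)
  obtain ⟨x, y, rfl⟩ := List.length_eq_two.1 hperm.length_eq
  have hxy : x ≠ y := by simpa using hl
  suffices x * y = t * u ∧ y * x = t * u by simpa
  rcases (hmem x).1 (by simp) with rfl | rfl <;> rcases (hmem y).1 (by simp) with rfl | rfl <;>
    simp_all [htu.eq]

/-- In `S_n` with Coxeter element `c = (1,2,…,n)`, the lexicographic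
order on transpositions is a reflection ordering compatible with `c`: for every element
`w` of reflection length `2` below `c` in absolute order, if `l = [u₁, …, u_m]` is the
list of all transpositions `≤_T w` in increasing lexicographic order, then
`w = uᵢ u_{i-1}` for all `1 ≤ i ≤ m`, indices taken modulo `m`. -/
theorem lex_order_compatible (n : ℕ) (w : Perm (Fin n))
    (h2 : reflLen w = 2) (hwc : absLe w (finRotate n))
    (l : List (Perm (Fin n))) (hsort : l.Chain' lexLt)
    (hmem : ∀ t : Perm (Fin n), t ∈ l ↔ (t.IsSwap ∧ absLe t w)) :
    ∀ p ∈ l.zip (l.rotate (l.length - 1)), p.1 * p.2 = w := by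
  have hl : l.Pairwise lexLt := List.isChain_iff_pairwise.1 hsort
  obtain ⟨t, u, ht, hu, rfl⟩ := exists_isSwap_mul_eq_of_reflLen_eq_two h2
  have hmem' : ∀ s, s ∈ l ↔ s.IsSwap ∧ (s * (t * u)).IsSwap := fun s =>
    (hmem s).trans (and_congr_right fun hs => absLe_iff_isSwap_mul hs h2)
  rcases swap_mul_swap_cases ht hu with h1 | ⟨p, q, r, s, hpqrs, hw⟩ | ⟨a, b, c, hab, hbc, hw | hw⟩
  · simp [h1, reflLen_one] at h2
  · rw [hw] at hmem' h2 ⊢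
    have hne : swap p q ≠ swap r s := fun h => by simp [h, reflLen_one] at h2
    exact forall_mem_zip_rotate_of_mem_iff_pair (disjoint_swap_swap hpqrs).commute hne hl.nodup
      fun x => (hmem' x).trans (isSwap_and_isSwap_mul_swap_mul_swap_iff_of_nodup hpqrs)
  · rw [hw] at hmem' ⊢
    exact forall_mem_zip_rotate_of_lt_lt hab hbc hl fun x =>
      (hmem' x).trans (isSwap_and_isSwap_mul_swap_mul_swap_iff hab.ne hbc.ne (hab.trans hbc).ne)
  · rw [hw] at h2 hwc
    exact absurd hwc (not_absLe_finRotate hab hbc h2)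
end
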